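/- arXiv:1708.06168 — 2 statements merged into one kernel-verified Lean document; each statement's English description precedes it below -/
import Mathlib

section
/- Suppose u is a solution of u'' + p u = 0 and v is a solution of v'' + P v = 0 on (a,b), with initial conditions v(c) = u(c) > 0 and v'(c) = u'(c) at some c ∈ (a,b). If P ≥ p on [c,b) with P ≢ p there, u > 0 on [c,b), and ∫^b dx/u²(x) = ∞, then v has a zero in (c,b). -/
/-!
If `v` had no zero in `(c, b)`, it would stay positive on `[c, b)`. The Wronskian
`W = u' v - u v'` then satisfies `W' = (P - p) u v ≥ 0` and `W c = 0`, and it becomes positive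
to the right of a point where `P > p`, say `W ≥ w > 0` on `[x₀, b)`. Since `(v / u)' = -W / u²`,
integrating from `x₀` gives `w ∫_{x₀}^X u⁻² ≤ v x₀ / u x₀` for all `X < b`, contradicting
`∫^b u⁻² = ∞`.
-/

open MeasureTheory Set Filter Topology

lemma IsPreconnected.forall_pos_of_ne_zero {s : Set ℝ} {f : ℝ → ℝ} {c : ℝ}
    (hs : IsPreconnected s) (hf : ContinuousOn f s) (hc : c ∈ s) (hfc : 0 < f c)
    (hf0 : ∀ x ∈ s, f x ≠ 0) : ∀ x ∈ s, 0 < f x := by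
  intro x hx
  by_contra! hfx
  obtain ⟨z, hz, hfz⟩ := hs.intermediate_value hx hc hf ⟨hfx, hfc.le⟩
  exact hf0 z hz hfz

lemma HasDerivAt.exists_gt_lt_of_pos {f : ℝ → ℝ} {f' x : ℝ} {s : Set ℝ}
    (hf : HasDerivAt f f' x) (hf' : 0 < f') (hs : s ∈ 𝓝[>] x) :
    ∃ y ∈ s, x < y ∧ f x < f y := by
  have hslope : ∀ᶠ y in 𝓝[>] x, 0 < slope f x y :=
    (hasDerivAt_iff_tendsto_slope.1 hf).mono_left (nhdsGT_le_nhdsNE x)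
      |>.eventually (eventually_gt_nhds hf')
  obtain ⟨y, hys, hxy, hy⟩ :=
    ((eventually_mem_set.2 hs).and (eventually_mem_nhdsWithin.and hslope)).exists
  exact ⟨y, hys, hxy, (slope_pos_iff hxy).1 hy⟩

lemma preimage_coe_Ioo_inter_Ici {a b : EReal} {c : ℝ} (hac : a < c) :
    Real.toEReal ⁻¹' Ioo a b ∩ Ici c = Real.toEReal ⁻¹' Ico (c : EReal) b :=
  ext fun _ => ⟨fun hx => ⟨EReal.coe_le_coe_iff.2 hx.2, hx.1.2⟩,
    fun hx => ⟨⟨hac.trans_le hx.1, hx.2⟩, EReal.coe_le_coe_iff.1 hx.1⟩⟩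

lemma preimage_coe_Ioo_inter_Ioi {a b : EReal} {c : ℝ} (hac : a < c) :
    Real.toEReal ⁻¹' Ioo a b ∩ Ioi c = Real.toEReal ⁻¹' Ioo (c : EReal) b :=
  ext fun _ => ⟨fun hx => ⟨EReal.coe_lt_coe_iff.2 hx.2, hx.1.2⟩,
    fun hx => ⟨⟨hac.trans hx.1, hx.2⟩, EReal.coe_lt_coe_iff.1 hx.1⟩⟩

lemma preimage_coe_Ico_mem_nhdsGT {c x : ℝ} {β : EReal}
    (hx : x ∈ Real.toEReal ⁻¹' Ico (c : EReal) β) : Real.toEReal ⁻¹' Ico (c : EReal) β ∈ 𝓝[>] x :=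
  mem_of_superset
    (inter_mem_nhdsWithin _ ((isOpen_Iio.preimage continuous_coe_real_ereal).mem_nhds hx.2))
    fun _ hy => ⟨hx.1.trans (EReal.coe_le_coe_iff.2 hy.1.le), hy.2⟩

lemma setLIntegral_preimage_Ioo_le {g : ℝ → ENNReal} {c : ℝ} {β : EReal} {C : ENNReal}
    (hcβ : (c : EReal) < β) (h : ∀ x : ℝ, c < x → (x : EReal) < β → ∫⁻ t in Ioc c x, g t ≤ C) :
    ∫⁻ x in Real.toEReal ⁻¹' Ioo (c : EReal) β, g x ≤ C := by
  obtain ⟨d, hd_mono, hd_mem, hd_lim⟩ := exists_seq_strictMono_tendsto' hcβ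
  have hd_real : ∀ n, ((d n).toReal : EReal) = d n := fun n =>
    EReal.coe_toReal (hd_mem n).2.ne_top (hd_mem n).1.ne_bot
  have hcover : Real.toEReal ⁻¹' Ioo (c : EReal) β = ⋃ n, Ioc c (d n).toReal := by
    ext x
    simp only [mem_preimage, mem_Ioo, mem_iUnion, mem_Ioc]
    constructor
    · rintro ⟨hcx, hxβ⟩
      obtain ⟨n, hn⟩ := (hd_lim.eventually (eventually_gt_nhds hxβ)).exists
      refine ⟨n, EReal.coe_lt_coe_iff.1 hcx, ?_⟩
      rw [← EReal.coe_le_coe_iff, hd_real]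
      exact hn.le
    · rintro ⟨n, hcx, hxd⟩
      refine ⟨EReal.coe_lt_coe_iff.2 hcx, ?_⟩
      rw [← EReal.coe_le_coe_iff, hd_real] at hxd
      exact hxd.trans_lt (hd_mem n).2
  rw [hcover, setLIntegral_iUnion_of_directed _ ?_]
  · refine iSup_le fun n => h _ ?_ ?_
    · rw [← EReal.coe_lt_coe_iff, hd_real]; exact (hd_mem n).1
    · rw [hd_real]; exact (hd_mem n).2
  · refine Monotone.directed_le fun m n hmn => Ioc_subset_Ioc_right ?_
    rw [← EReal.coe_le_coe_iff, hd_real, hd_real]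
    exact hd_mono.monotone hmn

lemma integrableOn_one_div_sq {u : ℝ → ℝ} {a b : ℝ} (hu : ContinuousOn u (Icc a b))
    (hu0 : ∀ x ∈ Icc a b, u x ≠ 0) : IntegrableOn (fun x => 1 / u x ^ 2) (Icc a b) :=
  (continuousOn_const.div (hu.pow 2) fun x hx => pow_ne_zero 2 (hu0 x hx)).integrableOn_Icc

noncomputable def wronskian (u v : ℝ → ℝ) (x : ℝ) : ℝ := deriv u x * v x - u x * deriv v x

lemma hasDerivAt_wronskian {u v : ℝ → ℝ} {p P x : ℝ}
    (hu : HasDerivAt u (deriv u x) x) (hu' : HasDerivAt (deriv u) (-(p * u x)) x)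
    (hv : HasDerivAt v (deriv v x) x) (hv' : HasDerivAt (deriv v) (-(P * v x)) x) :
    HasDerivAt (wronskian u v) ((P - p) * (u x * v x)) x :=
  ((hu'.mul hv).sub (hu.mul hv')).congr_deriv (by ring)

lemma monotoneOn_wronskian {p P u v : ℝ → ℝ} {s : Set ℝ} (hs : Convex ℝ s)
    (hu : ∀ x ∈ s, HasDerivAt u (deriv u x) x ∧ HasDerivAt (deriv u) (-(p x * u x)) x)
    (hv : ∀ x ∈ s, HasDerivAt v (deriv v x) x ∧ HasDerivAt (deriv v) (-(P x * v x)) x)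
    (hpP : ∀ x ∈ s, p x ≤ P x) (hu_pos : ∀ x ∈ s, 0 < u x) (hv_pos : ∀ x ∈ s, 0 < v x) :
    MonotoneOn (wronskian u v) s := by
  have hW : ∀ x ∈ s, HasDerivAt (wronskian u v) ((P x - p x) * (u x * v x)) x := fun x hx =>
    hasDerivAt_wronskian (hu x hx).1 (hu x hx).2 (hv x hx).1 (hv x hx).2
  refine monotoneOn_of_hasDerivWithinAt_nonneg hs (HasDerivAt.continuousOn hW)
    (fun x hx => (hW x (interior_subset hx)).hasDerivWithinAt) fun x hx => ?_
  replace hx := interior_subset hx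
  exact mul_nonneg (sub_nonneg.2 (hpP x hx)) (mul_pos (hu_pos x hx) (hv_pos x hx)).le

lemma mul_integral_one_div_sq_le {u v : ℝ → ℝ} {x₀ X w : ℝ} (hX : x₀ ≤ X)
    (hu : ∀ x ∈ Icc x₀ X, HasDerivAt u (deriv u x) x)
    (hv : ∀ x ∈ Icc x₀ X, HasDerivAt v (deriv v x) x)
    (hu_pos : ∀ x ∈ Icc x₀ X, 0 < u x) (hw : ∀ x ∈ Icc x₀ X, w ≤ wronskian u v x) :
    w * ∫ x in x₀..X, 1 / u x ^ 2 ≤ v x₀ / u x₀ - v X / u X := by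
  have hquot : ∀ x ∈ Icc x₀ X,
      HasDerivAt (fun x => -(v x / u x)) (wronskian u v x / u x ^ 2) x := fun x hx =>
    ((hv x hx).div (hu x hx) (hu_pos x hx).ne').neg.congr_deriv (by unfold wronskian; ring)
  have hint := (integrableOn_one_div_sq (HasDerivAt.continuousOn hu)
    fun x hx => (hu_pos x hx).ne').const_mul w
  rw [← intervalIntegral.integral_const_mul]
  convert intervalIntegral.integral_le_sub_of_hasDeriv_right_of_le hX
    (HasDerivAt.continuousOn hquot)
    (fun x hx => (hquot x (Ioo_subset_Icc_self hx)).hasDerivWithinAt) hint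
    (fun x hx => ?_) using 1
  · ring
  · have hx' := Ioo_subset_Icc_self hx
    rw [mul_one_div]
    exact div_le_div_of_nonneg_right (hw x hx') (sq_nonneg _)

lemma setLIntegral_one_div_sq_le {u v : ℝ → ℝ} {x₀ w : ℝ} {β : EReal}
    (hx₀β : (x₀ : EReal) < β) (hw : 0 < w)
    (hu : ∀ x ∈ Real.toEReal ⁻¹' Ico (x₀ : EReal) β, HasDerivAt u (deriv u x) x)
    (hv : ∀ x ∈ Real.toEReal ⁻¹' Ico (x₀ : EReal) β, HasDerivAt v (deriv v x) x)
    (hu_pos : ∀ x ∈ Real.toEReal ⁻¹' Ico (x₀ : EReal) β, 0 < u x)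
    (hv_pos : ∀ x ∈ Real.toEReal ⁻¹' Ico (x₀ : EReal) β, 0 < v x)
    (hW : ∀ x ∈ Real.toEReal ⁻¹' Ico (x₀ : EReal) β, w ≤ wronskian u v x) :
    ∫⁻ x in Real.toEReal ⁻¹' Ioo (x₀ : EReal) β, ENNReal.ofReal (1 / u x ^ 2) ≤
      ENNReal.ofReal (v x₀ / u x₀ / w) := by
  refine setLIntegral_preimage_Ioo_le hx₀β fun X hx₀X hXβ => ?_
  have hX : X ∈ Real.toEReal ⁻¹' Ico (x₀ : EReal) β := ⟨EReal.coe_le_coe_iff.2 hx₀X.le, hXβ⟩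
  have hsub : Icc x₀ X ⊆ Real.toEReal ⁻¹' Ico (x₀ : EReal) β := fun x hx =>
    ⟨EReal.coe_le_coe_iff.2 hx.1, (EReal.coe_le_coe_iff.2 hx.2).trans_lt hXβ⟩
  have hint := integrableOn_one_div_sq (HasDerivAt.continuousOn fun x hx => hu x (hsub hx))
    fun x hx => (hu_pos x (hsub hx)).ne'
  have hbound := mul_integral_one_div_sq_le hx₀X.le (fun x hx => hu x (hsub hx))
    (fun x hx => hv x (hsub hx)) (fun x hx => hu_pos x (hsub hx)) fun x hx => hW x (hsub hx)
  have hvX : 0 < v X / u X := div_pos (hv_pos X hX) (hu_pos X hX)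
  rw [← ofReal_integral_eq_lintegral_ofReal (hint.mono_set Ioc_subset_Icc_self)
    (ae_of_all _ fun x => by positivity), ← intervalIntegral.integral_of_le hx₀X.le]
  refine ENNReal.ofReal_le_ofReal ((le_div_iff₀' hw).2 ?_)
  linarith

lemma setLIntegral_one_div_sq_lt_top {u v : ℝ → ℝ} {c x₀ w : ℝ} {β : EReal}
    (hcx₀ : c < x₀) (hx₀β : (x₀ : EReal) < β) (hw : 0 < w)
    (hu : ∀ x ∈ Real.toEReal ⁻¹' Ico (c : EReal) β, HasDerivAt u (deriv u x) x)
    (hv : ∀ x ∈ Real.toEReal ⁻¹' Ico (c : EReal) β, HasDerivAt v (deriv v x) x)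
    (hu_pos : ∀ x ∈ Real.toEReal ⁻¹' Ico (c : EReal) β, 0 < u x)
    (hv_pos : ∀ x ∈ Real.toEReal ⁻¹' Ico (c : EReal) β, 0 < v x)
    (hW : ∀ x ∈ Real.toEReal ⁻¹' Ico (x₀ : EReal) β, w ≤ wronskian u v x) :
    ∫⁻ x in Real.toEReal ⁻¹' Ioo (c : EReal) β, ENNReal.ofReal (1 / u x ^ 2) < ⊤ := by
  have hhead : Icc c x₀ ⊆ Real.toEReal ⁻¹' Ico (c : EReal) β := fun x hx =>
    ⟨EReal.coe_le_coe_iff.2 hx.1, (EReal.coe_le_coe_iff.2 hx.2).trans_lt hx₀β⟩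
  have htail : Real.toEReal ⁻¹' Ico (x₀ : EReal) β ⊆ Real.toEReal ⁻¹' Ico (c : EReal) β :=
    fun x hx => ⟨(EReal.coe_le_coe_iff.2 hcx₀.le).trans hx.1, hx.2⟩
  have hsplit : Real.toEReal ⁻¹' Ioo (c : EReal) β ⊆
      Ioc c x₀ ∪ Real.toEReal ⁻¹' Ioo (x₀ : EReal) β := fun x hx =>
    (le_or_gt x x₀).imp (fun h => ⟨EReal.coe_lt_coe_iff.1 hx.1, h⟩)
      fun h => ⟨EReal.coe_lt_coe_iff.2 h, hx.2⟩
  have hhead_fin : ∫⁻ x in Ioc c x₀, ENNReal.ofReal (1 / u x ^ 2) < ⊤ :=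
    ((integrableOn_one_div_sq (HasDerivAt.continuousOn fun x hx => hu x (hhead hx))
      fun x hx => (hu_pos x (hhead hx)).ne').mono_set Ioc_subset_Icc_self).lintegral_lt_top
  have htail_fin := setLIntegral_one_div_sq_le hx₀β hw (fun x hx => hu x (htail hx))
    (fun x hx => hv x (htail hx)) (fun x hx => hu_pos x (htail hx))
    (fun x hx => hv_pos x (htail hx)) hW
  exact ((lintegral_mono_set hsplit).trans (lintegral_union_le _ _ _)).trans_lt
    (ENNReal.add_lt_top.2 ⟨hhead_fin, htail_fin.trans_lt ENNReal.ofReal_lt_top⟩)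

theorem comparison_half_interval_general (a b : EReal)
    (p P u v : ℝ → ℝ) (c : ℝ)
    (I : Set ℝ) (hI : I = {x : ℝ | a < (x : EReal) ∧ (x : EReal) < b})
    (hc : c ∈ I)
    (hu : ∀ x ∈ I, HasDerivAt u (deriv u x) x ∧ HasDerivAt (deriv u) (-(p x * u x)) x)
    (hv : ∀ x ∈ I, HasDerivAt v (deriv v x) x ∧ HasDerivAt (deriv v) (-(P x * v x)) x)
    (hvc : v c = u c) (hvc' : deriv v c = deriv u c)
    (hPp : ∀ x ∈ I ∩ Ici c, p x ≤ P x) (hne : ∃ x ∈ I ∩ Ici c, P x ≠ p x)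
    (hupos : ∀ x ∈ I ∩ Ici c, 0 < u x)
    (hdivb : ∫⁻ x in I ∩ Ioi c, ENNReal.ofReal (1 / (u x) ^ 2) = ⊤) :
    ∃ x ∈ I, c < x ∧ v x = 0 := by
  by_contra! hv_ne
  replace hI : I = Real.toEReal ⁻¹' Ioo a b := hI
  subst hI
  rw [preimage_coe_Ioo_inter_Ici hc.1] at hPp hne hupos
  rw [preimage_coe_Ioo_inter_Ioi hc.1] at hdivb
  set S := Real.toEReal ⁻¹' Ico (c : EReal) b
  have hSI : S ⊆ Real.toEReal ⁻¹' Ioo a b := fun x hx => ⟨hc.1.trans_le hx.1, hx.2⟩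
  have hcS : c ∈ S := ⟨le_rfl, hc.2⟩
  have hS : S.OrdConnected := ordConnected_Ico.preimage_mono EReal.coe_strictMono.monotone
  have hv_pos : ∀ x ∈ S, 0 < v x := by
    have hvc_pos : 0 < v c := hvc ▸ hupos c hcS
    refine hS.isPreconnected.forall_pos_of_ne_zero
      (HasDerivAt.continuousOn fun x hx => (hv x (hSI hx)).1) hcS hvc_pos fun x hx => ?_
    rcases (EReal.coe_le_coe_iff.1 hx.1).eq_or_lt with rfl | hcx
    exacts [hvc_pos.ne', hv_ne x (hSI hx) hcx]
  have hW_mono := monotoneOn_wronskian hS.convex (fun x hx => hu x (hSI hx))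
    (fun x hx => hv x (hSI hx)) hPp hupos hv_pos
  have hWc : wronskian u v c = 0 := by simp only [wronskian, hvc, hvc']; ring
  obtain ⟨x₁, hx₁, hpP⟩ := hne
  obtain ⟨x₀, hx₀, hx₁x₀, hW₁₀⟩ := (hasDerivAt_wronskian (hu x₁ (hSI hx₁)).1
    (hu x₁ (hSI hx₁)).2 (hv x₁ (hSI hx₁)).1 (hv x₁ (hSI hx₁)).2).exists_gt_lt_of_pos
    (mul_pos (sub_pos.2 ((hPp x₁ hx₁).lt_of_ne hpP.symm))
      (mul_pos (hupos x₁ hx₁) (hv_pos x₁ hx₁)))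
    (preimage_coe_Ico_mem_nhdsGT hx₁)
  have hcx₁ : c ≤ x₁ := EReal.coe_le_coe_iff.1 hx₁.1
  refine (setLIntegral_one_div_sq_lt_top (hcx₁.trans_lt hx₁x₀) hx₀.2
    ((hWc ▸ hW_mono hcS hx₁ hcx₁).trans_lt hW₁₀) (fun x hx => (hu x (hSI hx)).1)
    (fun x hx => (hv x (hSI hx)).1) hupos hv_pos fun x hx =>
      hW_mono hx₀ ⟨hx₀.1.trans hx.1, hx.2⟩ (EReal.coe_le_coe_iff.1 hx.1)).ne hdivb

/-- If `v` agrees with `u` to first order at `c`, `P ≥ p` (with `P ≢ p`) and `u > 0` on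
`[c,b)`, and `∫^b dx/u² = ∞`, then `v` vanishes somewhere in `(c,b)`. -/
theorem comparison_half_interval (a b : EReal) (hab : a < b)
    (p P u v : ℝ → ℝ) (c : ℝ)
    (I : Set ℝ) (hI : I = {x : ℝ | a < (x : EReal) ∧ (x : EReal) < b})
    (hc : c ∈ I)
    (hp : ContinuousOn p I) (hP : ContinuousOn P I)
    (hu : ∀ x ∈ I, HasDerivAt u (deriv u x) x ∧ HasDerivAt (deriv u) (-(p x * u x)) x)
    (hv : ∀ x ∈ I, HasDerivAt v (deriv v x) x ∧ HasDerivAt (deriv v) (-(P x * v x)) x)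
    (hvc : v c = u c) (hucpos : 0 < u c) (hvc' : deriv v c = deriv u c)
    (hPp : ∀ x ∈ I ∩ Ici c, p x ≤ P x) (hne : ∃ x ∈ I ∩ Ici c, P x ≠ p x)
    (hupos : ∀ x ∈ I ∩ Ici c, 0 < u x)
    (hdivb : ∫⁻ x in I ∩ Ioi c, ENNReal.ofReal (1 / (u x) ^ 2) = ⊤) :
    ∃ x ∈ I, c < x ∧ v x = 0 :=
  comparison_half_interval_general a b p P u v c I hI hc hu hv hvc hvc' hPp hne hupos hdivb
end

section
/- Let u > 0 be a positive solution of u'' + p u = 0 on (a,b) with L₁ = ∫_a^{x₀} dt/u² < ∞ but L₂ = ∫_{x₀}^b dt/u² = ∞. Let f(x) = ∫_{x₀}^x dt/u² and P(x) = p(x) + f'(x)²/(4(f(x)+L₁)²). Then P > p on (a,b) and v'' + P v = 0 admits a solution positive on all of (a,b). -/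
open MeasureTheory Set intervalIntegral

/-!
Reduction of order: since `(1 / u²)` is the derivative of `F = f + L₁`, the function
`v = u √F` satisfies `v'' + (p + F'² / (4 F²)) v = 0` wherever `F > 0`, by direct
differentiation. The finiteness of `L₁` is exactly what makes `F` positive on all of `(a, b)`:
`F x` is the integral of `1 / u²` over `(a, x)`.
-/

def IsSolutionOn (q v : ℝ → ℝ) (I : Set ℝ) : Prop :=
  ∀ x ∈ I, HasDerivAt v (deriv v x) x ∧ HasDerivAt (deriv v) (-(q x * v x)) x

theorem isSolutionOn_of_hasDerivAt {I : Set ℝ} (hI : IsOpen I) {q v v' : ℝ → ℝ}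
    (hv : ∀ x ∈ I, HasDerivAt v (v' x) x) (hv' : ∀ x ∈ I, HasDerivAt v' (-(q x * v x)) x) :
    IsSolutionOn q v I := by
  have hderiv : ∀ x ∈ I, deriv v x = v' x := fun x hx => (hv x hx).deriv
  refine fun x hx => ⟨hderiv x hx ▸ hv x hx, (hv' x hx).congr_of_eventuallyEq ?_⟩
  filter_upwards [hI.mem_nhds hx] using hderiv

theorem IsSolutionOn.mul_sqrt {I : Set ℝ} (hI : IsOpen I) {p u F : ℝ → ℝ}
    (hu : IsSolutionOn p u I) (hu0 : ∀ x ∈ I, u x ≠ 0)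
    (hF : ∀ x ∈ I, HasDerivAt F (1 / u x ^ 2) x) (hFpos : ∀ x ∈ I, 0 < F x) :
    IsSolutionOn (fun x => p x + deriv F x ^ 2 / (4 * F x ^ 2)) (fun x => u x * √(F x)) I := by
  have hsqrt : ∀ x ∈ I, HasDerivAt (fun y => √(F y)) (1 / u x ^ 2 / (2 * √(F x))) x :=
    fun x hx => (hF x hx).sqrt (hFpos x hx).ne'
  refine isSolutionOn_of_hasDerivAt hI
    (v' := fun x => deriv u x * √(F x) + (2 * (u x * √(F x)))⁻¹) (fun x hx => ?_) (fun x hx => ?_)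
  all_goals
    have hux := hu0 x hx
    have hs0 := (Real.sqrt_pos.mpr (hFpos x hx)).ne'
  · refine ((hu x hx).1.mul (hsqrt x hx)).congr_deriv ?_
    field_simp
  · have hv := ((hu x hx).1.mul (hsqrt x hx)).const_mul 2
    have hv0 : 2 * (u x * √(F x)) ≠ 0 := mul_ne_zero two_ne_zero (mul_ne_zero hux hs0)
    refine (((hu x hx).2.mul (hsqrt x hx)).add (hv.inv hv0)).congr_deriv ?_
    have hs2 := Real.sq_sqrt (hFpos x hx).le
    simp only [Pi.mul_apply, (hF x hx).deriv]
    generalize √(F x) = s at hs2 hs0 ⊢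
    rw [← hs2]
    field_simp
    ring

theorem hasDerivAt_integral_of_continuousOn {I : Set ℝ} (hI : IsOpen I) (hI' : I.OrdConnected)
    {g : ℝ → ℝ} (hg : ContinuousOn g I) {x₀ x : ℝ} (hx₀ : x₀ ∈ I) (hx : x ∈ I) :
    HasDerivAt (fun y => ∫ t in x₀..y, g t) (g x) x :=
  integral_hasDerivAt_right ((hg.mono (hI'.uIcc_subset hx₀ hx)).intervalIntegrable)
    (hg.stronglyMeasurableAtFilter hI x hx) (hg.continuousAt (hI.mem_nhds hx))

theorem intervalIntegral_le_of_setLIntegral_eq {g : ℝ → ℝ} {S : Set ℝ} {y z L : ℝ}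
    (hyz : y ≤ z) (hS : Ioo y z ⊆ S) (hg : IntervalIntegrable g volume y z)
    (hg0 : ∀ t ∈ Ioo y z, 0 ≤ g t) (hL : ∫⁻ t in S, ENNReal.ofReal (g t) = ENNReal.ofReal L)
    (hpos : 0 < ∫ t in y..z, g t) : ∫ t in y..z, g t ≤ L := by
  have hle : ENNReal.ofReal (∫ t in y..z, g t) ≤ ENNReal.ofReal L := by
    rw [integral_of_le hyz, integral_Ioc_eq_integral_Ioo,
      ofReal_integral_eq_lintegral_ofReal (hg.1.mono_set Ioo_subset_Ioc_self)
        (ae_restrict_of_forall_mem measurableSet_Ioo hg0), ← hL]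
    exact lintegral_mono_set hS
  exact (ENNReal.ofReal_le_ofReal_iff'.mp hle).resolve_right hpos.not_ge

theorem intervalIntegral_add_pos_of_setLIntegral_Iio_eq {I : Set ℝ} (hI : IsOpen I)
    (hI' : I.OrdConnected) {g : ℝ → ℝ} (hg : ContinuousOn g I) (hgpos : ∀ x ∈ I, 0 < g x)
    {x₀ L : ℝ} (hx₀ : x₀ ∈ I) (hL : ∫⁻ t in I ∩ Iio x₀, ENNReal.ofReal (g t) = ENNReal.ofReal L)
    {x : ℝ} (hx : x ∈ I) : 0 < (∫ t in x₀..x, g t) + L := by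
  obtain ⟨l, hl, hlI⟩ := exists_Ioc_subset_of_mem_nhds
    (hI.mem_nhds (min_rec' I hx hx₀)) ⟨min x x₀ - 1, by linarith⟩
  obtain ⟨y, hly, hym⟩ := exists_between hl
  have hy : y ∈ I := hlI ⟨hly, hym.le⟩
  have hyx : y < x := hym.trans_le (min_le_left x x₀)
  have hyx₀ : y < x₀ := hym.trans_le (min_le_right x x₀)
  have hint : ∀ {c d}, c ∈ I → d ∈ I → IntervalIntegrable g volume c d :=
    fun hc hd => (hg.mono (hI'.uIcc_subset hc hd)).intervalIntegrable
  have hIoo : ∀ {d}, d ∈ I → Ioo y d ⊆ I :=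
    fun hd => Ioo_subset_Icc_self.trans (hI'.out hy hd)
  have hpos : ∀ {d}, d ∈ I → y < d → 0 < ∫ t in y..d, g t :=
    fun hd hyd => intervalIntegral_pos_of_pos_on (hint hy hd) (fun t ht => hgpos t (hIoo hd ht)) hyd
  have hleft : ∫ t in y..x₀, g t ≤ L :=
    intervalIntegral_le_of_setLIntegral_eq hyx₀.le (subset_inter (hIoo hx₀) fun t ht => ht.2)
      (hint hy hx₀) (fun t ht => (hgpos t (hIoo hx₀ ht)).le) hL (hpos hx₀ hyx₀)
  have hsplit := integral_add_adjacent_intervals (hint hy hx₀) (hint hx₀ hx)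
  linarith [hpos hx hyx]

theorem comparison_fails_one_finite_general (a b : EReal)
    (p u : ℝ → ℝ) (x₀ L₁ : ℝ)
    (I : Set ℝ) (hI : I = {x : ℝ | a < (x : EReal) ∧ (x : EReal) < b})
    (hx₀ : x₀ ∈ I)
    (hu : ∀ x ∈ I, HasDerivAt u (deriv u x) x ∧ HasDerivAt (deriv u) (-(p x * u x)) x)
    (hupos : ∀ x ∈ I, 0 < u x)
    (hL₁ : ∫⁻ x in I ∩ Iio x₀, ENNReal.ofReal (1 / (u x) ^ 2) = ENNReal.ofReal L₁)
    (f P : ℝ → ℝ)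
    (hf : ∀ x, f x = ∫ t in x₀..x, 1 / (u t) ^ 2)
    (hPdef : ∀ x, P x = p x + (deriv f x) ^ 2 / (4 * (f x + L₁) ^ 2)) :
    (∀ x ∈ I, p x < P x) ∧
    ∃ v : ℝ → ℝ,
      (∀ x ∈ I, HasDerivAt v (deriv v x) x ∧ HasDerivAt (deriv v) (-(P x * v x)) x) ∧
      ∀ x ∈ I, 0 < v x := by
  have hIopen : IsOpen I := hI ▸ isOpen_Ioo.preimage continuous_coe_real_ereal
  have hIconn : I.OrdConnected := hI ▸ ordConnected_Ioo.preimage_mono EReal.coe_strictMono.monotone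
  have hu0 : ∀ x ∈ I, u x ≠ 0 := fun x hx => (hupos x hx).ne'
  have hg : ContinuousOn (fun t => 1 / u t ^ 2) I :=
    continuousOn_const.div ((HasDerivAt.continuousOn fun x hx => (hu x hx).1).pow 2)
      fun x hx => pow_ne_zero 2 (hu0 x hx)
  have hgpos : ∀ x ∈ I, 0 < 1 / u x ^ 2 := fun x hx => by have := hupos x hx; positivity
  have hF : ∀ x ∈ I, HasDerivAt (fun y => f y + L₁) (1 / u x ^ 2) x := fun x hx =>
    funext hf ▸ (hasDerivAt_integral_of_continuousOn hIopen hIconn hg hx₀ hx).add_const L₁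
  have hFpos : ∀ x ∈ I, 0 < f x + L₁ := fun x hx =>
    hf x ▸ intervalIntegral_add_pos_of_setLIntegral_Iio_eq hIopen hIconn hg hgpos hx₀ hL₁ hx
  obtain rfl : P = fun x => p x + deriv (fun y => f y + L₁) x ^ 2 / (4 * (f x + L₁) ^ 2) :=
    funext fun x => by rw [hPdef, deriv_add_const]
  refine ⟨fun x hx => ?_, _, IsSolutionOn.mul_sqrt hIopen hu hu0 hF hFpos,
    fun x hx => mul_pos (hupos x hx) (Real.sqrt_pos.mpr (hFpos x hx))⟩
  have := hFpos x hx
  have := hupos x hx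
  exact lt_add_of_pos_right _ (by rw [(hF x hx).deriv]; positivity)

/-- If `L₁ = ∫_a^{x₀} dt/u² < ∞` while `∫_{x₀}^b dt/u² = ∞`, then
`P = p + f'²/(4(f+L₁)²)` satisfies `P > p` and `v'' + P v = 0` has a positive solution. -/
theorem comparison_fails_one_finite (a b : EReal) (hab : a < b)
    (p u : ℝ → ℝ) (x₀ L₁ : ℝ)
    (I : Set ℝ) (hI : I = {x : ℝ | a < (x : EReal) ∧ (x : EReal) < b})
    (hx₀ : x₀ ∈ I)
    (hp : ContinuousOn p I)
    (hu : ∀ x ∈ I, HasDerivAt u (deriv u x) x ∧ HasDerivAt (deriv u) (-(p x * u x)) x)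
    (hupos : ∀ x ∈ I, 0 < u x)
    (hL₁ : ∫⁻ x in I ∩ Iio x₀, ENNReal.ofReal (1 / (u x) ^ 2) = ENNReal.ofReal L₁)
    (hL₂ : ∫⁻ x in I ∩ Ioi x₀, ENNReal.ofReal (1 / (u x) ^ 2) = ⊤)
    (f P : ℝ → ℝ)
    (hf : ∀ x, f x = ∫ t in x₀..x, 1 / (u t) ^ 2)
    (hPdef : ∀ x, P x = p x + (deriv f x) ^ 2 / (4 * (f x + L₁) ^ 2)) :
    (∀ x ∈ I, p x < P x) ∧
    ∃ v : ℝ → ℝ,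
      (∀ x ∈ I, HasDerivAt v (deriv v x) x ∧ HasDerivAt (deriv v) (-(P x * v x)) x) ∧
      ∀ x ∈ I, 0 < v x :=
  comparison_fails_one_finite_general a b p u x₀ L₁ I hI hx₀ hu hupos hL₁ f P hf hPdef
end
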